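/- arXiv:2110.01201 — 2 statements merged into one kernel-verified Lean document; each statement's English description precedes it below -/
import Mathlib

section
/- Let φ be a Bernstein function with φ(0) = 0 such that, for some β ∈ [0,1) and c ∈ (0,1], φ(λθ) ≥ c·λ^β·φ(θ) for all λ ∈ (0,1] and all θ > 0 (global weak upper scaling of index β). For t > 0 let μ_t be the Borel probability measure on [0,∞) with Laplace transform e^{−t·φ(λ)}. Then there exists a constant C > 0, depending only on c and β, such that μ_t([r,∞)) ≥ C · min{1, t·φ(1/r)} for all t > 0 and all r > 0. -/
open MeasureTheory Real Set

noncomputable section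

/-- A Bernstein function: continuous on `[0,∞)`, smooth on `(0,∞)`, nonnegative, and
`(-1)^(n-1) φ^(n)(u) ≥ 0` for all `u > 0` and `n ≥ 1`. -/
def IsBernstein (φ : ℝ → ℝ) : Prop :=
  ContinuousOn φ (Set.Ici 0) ∧ ContDiffOn ℝ (⊤ : ℕ∞) φ (Set.Ioi 0) ∧
  (∀ x ∈ Set.Ici (0 : ℝ), 0 ≤ φ x) ∧
  ∀ n : ℕ, 1 ≤ n → ∀ u : ℝ, 0 < u → 0 ≤ (-1 : ℝ) ^ (n - 1) * iteratedDeriv n φ u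

/-- `μ t` is the law of the subordinator with Laplace exponent `φ` at time `t > 0`. -/
def IsSubordinatorLaw (φ : ℝ → ℝ) (μ : ℝ → Measure ℝ) : Prop :=
  ∀ t : ℝ, 0 < t →
    IsProbabilityMeasure (μ t) ∧ μ t (Set.Iio 0) = 0 ∧
    ∀ l : ℝ, 0 ≤ l → (∫ s, Real.exp (-l * s) ∂μ t) = Real.exp (-t * φ l)

lemma aux_convex (u : ℝ) (h0 : 0 ≤ u) (h1 : u ≤ 1) :
    (1 - Real.exp (-1)) * u ≤ 1 - Real.exp (-u) := by
  have hc := convexOn_exp.2 (Set.mem_univ (0:ℝ)) (Set.mem_univ (-1:ℝ))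
    (by linarith : (0:ℝ) ≤ 1 - u) h0 (by ring)
  simp only [smul_eq_mul, mul_zero, zero_add, mul_neg, mul_one, Real.exp_zero] at hc
  -- hc : exp (-u) ≤ (1-u) * 1 + u * exp (-1)
  nlinarith [hc]

lemma aux_lower (y : ℝ) (hy : 0 ≤ y) :
    (1 - Real.exp (-1)) * min 1 y ≤ 1 - Real.exp (-y) := by
  rcases le_or_gt y 1 with h | h
  · rw [min_eq_right h]
    exact aux_convex y hy h
  · rw [min_eq_left h.le]
    have : Real.exp (-y) ≤ Real.exp (-1) := Real.exp_le_exp.mpr (by linarith)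
    linarith

lemma aux_upper (x : ℝ) (hx : 0 ≤ x) : 1 - Real.exp (-x) ≤ min 1 x := by
  refine le_min ?_ ?_
  · have := Real.exp_pos (-x); linarith
  · have := Real.add_one_le_exp (-x); linarith

set_option maxHeartbeats 1000000 in
theorem subordinator_tail_lower_bound
    (β c : ℝ) (hβ0 : 0 ≤ β) (hβ1 : β < 1) (hc0 : 0 < c) (hc1 : c ≤ 1) :
    ∃ C : ℝ, 0 < C ∧
      ∀ φ : ℝ → ℝ, IsBernstein φ → φ 0 = 0 →
        (∀ l : ℝ, 0 < l → l ≤ 1 → ∀ θ : ℝ, 0 < θ → c * l ^ β * φ θ ≤ φ (l * θ)) →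
        ∀ μ : ℝ → Measure ℝ, IsSubordinatorLaw φ μ →
          ∀ t : ℝ, 0 < t → ∀ r : ℝ, 0 < r →
            C * min 1 (t * φ (1 / r)) ≤ (μ t (Set.Ici r)).toReal := by
  have hE : 0 < 1 - Real.exp (-1) := by
    have := Real.exp_lt_exp.mpr (show (-1:ℝ) < 0 by norm_num)
    rw [Real.exp_zero] at this; linarith
  have h1β : 0 < 1 - β := by linarith
  set A : ℝ := 2 / ((1 - Real.exp (-1))^2 * c) with hA_def
  have hA0 : 0 < A := div_pos two_pos (mul_pos (pow_pos hE 2) hc0)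
  set K : ℝ := max 1 (A ^ (1/(1-β))) with hK_def
  have hK1 : 1 ≤ K := le_max_left _ _
  have hK0 : 0 < K := lt_of_lt_of_le one_pos hK1
  have hKA : A ≤ K ^ (1-β) := by
    have h := Real.rpow_le_rpow (Real.rpow_nonneg hA0.le _)
      (le_max_right 1 (A ^ (1/(1-β)))) h1β.le
    rwa [← Real.rpow_mul hA0.le, one_div_mul_cancel h1β.ne', Real.rpow_one] at h
  set a : ℝ := c * (1/K) ^ β with ha_def
  have hKinv0 : (0:ℝ) < 1/K := by positivity
  have hKinv1 : (1:ℝ)/K ≤ 1 := by rw [div_le_one hK0]; exact hK1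
  have ha0 : 0 < a := mul_pos hc0 (Real.rpow_pos_of_pos hKinv0 β)
  have ha1 : a ≤ 1 := by
    have : (1/K) ^ β ≤ 1 := Real.rpow_le_one hKinv0.le hKinv1 hβ0
    nlinarith
  set C : ℝ := (1 - Real.exp (-1)) * a / 2 with hC_def
  have hC0 : 0 < C := by positivity
  set D : ℝ := 1 / (K * (1 - Real.exp (-1))) with hD_def
  have hD0 : 0 < D := by positivity
  have hKb : K * (1/K) ^ β = K ^ (1-β) := by
    rw [one_div, Real.inv_rpow hK0.le, Real.rpow_sub hK0, Real.rpow_one, div_eq_mul_inv]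
  have hDC : D ≤ C := by
    have h2 : 2 ≤ (1 - Real.exp (-1))^2 * c * K ^ (1-β) := by
      have he : (1 - Real.exp (-1))^2 * c * A = 2 := by
        rw [hA_def]; field_simp
      calc (2:ℝ) = (1 - Real.exp (-1))^2 * c * A := he.symm
        _ ≤ (1 - Real.exp (-1))^2 * c * K ^ (1-β) :=
            mul_le_mul_of_nonneg_left hKA (by positivity)
    rw [hD_def, div_le_iff₀ (by positivity)]
    have hcalc : C * (K * (1 - Real.exp (-1)))
        = (1 - Real.exp (-1))^2 * c * (K * (1/K) ^ β) / 2 := by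
      rw [hC_def, ha_def]; ring
    rw [hcalc, hKb]; linarith
  refine ⟨C, hC0, ?_⟩
  intro φ hφ hφ0 hscale μ hμ t ht r hr
  obtain ⟨hprob, hnull, hlap⟩ := hμ t ht
  haveI := hprob
  have hae : ∀ᵐ s ∂μ t, 0 ≤ s := by
    have hset : {s : ℝ | ¬ 0 ≤ s} = Set.Iio 0 := by ext s; simp [not_le]
    rw [ae_iff, hset]; exact hnull
  have hint : ∀ l : ℝ, 0 ≤ l → Integrable (fun s => Real.exp (-l * s)) (μ t) := by
    intro l hl
    refine Integrable.mono' (integrable_const (1:ℝ)) ?_ ?_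
    · exact (Real.continuous_exp.comp (continuous_const.mul continuous_id)).aestronglyMeasurable
    · filter_upwards [hae] with s hs
      rw [Real.norm_eq_abs, abs_of_pos (Real.exp_pos _)]
      rw [Real.exp_le_one_iff]
      nlinarith
  have hone : ∀ l : ℝ, 0 ≤ l →
      ∫ s, (1 - Real.exp (-l * s)) ∂μ t = 1 - Real.exp (-t * φ l) := by
    intro l hl
    rw [integral_sub (integrable_const 1) (hint l hl), hlap l hl, integral_const]
    simp
  set l₁ : ℝ := 1/(K*r) with hl₁_def
  set l₂ : ℝ := 1/r with hl₂_def
  have hl₁0 : 0 ≤ l₁ := by positivity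
  have hl₂0 : 0 ≤ l₂ := by positivity
  -- pointwise inequality
  have hpt : ∀ s : ℝ, 0 ≤ s → 1 - Real.exp (-l₁ * s) ≤
      Set.indicator (Set.Ici r) (fun _ => (1:ℝ)) s + D * (1 - Real.exp (-l₂ * s)) := by
    intro s hs
    have hexp2 : Real.exp (-l₂ * s) ≤ 1 := by rw [Real.exp_le_one_iff]; nlinarith
    rcases le_or_gt r s with h | h
    · rw [Set.indicator_of_mem (by exact h : s ∈ Set.Ici r)]
      have h1 : Real.exp (-l₁ * s) > 0 := Real.exp_pos _
      nlinarith
    · rw [Set.indicator_of_notMem (by simpa [Set.mem_Ici, not_le] using h)]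
      rw [zero_add]
      have hLHS : 1 - Real.exp (-l₁ * s) ≤ l₁ * s := by
        have := Real.add_one_le_exp (-l₁ * s); linarith
      have hu0 : 0 ≤ s / r := by positivity
      have hu1 : s / r ≤ 1 := by rw [div_le_one hr]; exact h.le
      have hcv := aux_convex (s / r) hu0 hu1
      have heq : -l₂ * s = -(s / r) := by
        rw [hl₂_def]; field_simp
      rw [heq]
      have hD' : D * ((1 - Real.exp (-1)) * (s / r)) = l₁ * s := by
        rw [hD_def, hl₁_def]; field_simp
      calc 1 - Real.exp (-l₁ * s) ≤ l₁ * s := hLHS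
        _ = D * ((1 - Real.exp (-1)) * (s / r)) := hD'.symm
        _ ≤ D * (1 - Real.exp (-(s/r))) := mul_le_mul_of_nonneg_left hcv hD0.le
  -- integrate
  have hf_int : Integrable (fun s => 1 - Real.exp (-l₁ * s)) (μ t) :=
    (integrable_const 1).sub (hint l₁ hl₁0)
  have hind_int : Integrable (Set.indicator (Set.Ici r) (fun _ => (1:ℝ))) (μ t) :=
    (integrable_const (1:ℝ)).indicator measurableSet_Ici
  have hrest_int : Integrable (fun s => D * (1 - Real.exp (-l₂ * s))) (μ t) :=
    ((integrable_const 1).sub (hint l₂ hl₂0)).const_mul D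
  have hg_int : Integrable (fun s => Set.indicator (Set.Ici r) (fun _ => (1:ℝ)) s
      + D * (1 - Real.exp (-l₂ * s))) (μ t) := hind_int.add hrest_int
  have hmono := integral_mono_ae hf_int hg_int (hae.mono fun s hs => hpt s hs)
  rw [hone l₁ hl₁0] at hmono
  rw [integral_add hind_int hrest_int, integral_indicator_const (1:ℝ) measurableSet_Ici,
    integral_const_mul, hone l₂ hl₂0, smul_eq_mul, mul_one, measureReal_def] at hmono
  -- hmono : 1 - exp (-t * φ l₁) ≤ (μ t (Ici r)).toReal + D * (1 - exp (-t * φ l₂))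
  set x : ℝ := t * φ l₂ with hx_def
  set y : ℝ := t * φ l₁ with hy_def
  have hφ2 : 0 ≤ φ l₂ := hφ.2.2.1 l₂ hl₂0
  have hφ1 : 0 ≤ φ l₁ := hφ.2.2.1 l₁ hl₁0
  have hx0 : 0 ≤ x := by positivity
  have hy0 : 0 ≤ y := by positivity
  have hyx : a * x ≤ y := by
    have hsc := hscale (1/K) hKinv0 hKinv1 (1/r) (by positivity)
    have heq : (1/K) * (1/r) = l₁ := by
      rw [hl₁_def, div_mul_div_comm, one_mul]
    rw [heq] at hsc
    have := mul_le_mul_of_nonneg_left hsc ht.le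
    rw [hx_def, hy_def, ha_def]
    linear_combination this
  have hmin0 : 0 ≤ min 1 x := le_min zero_le_one hx0
  have hmin : a * min 1 x ≤ min 1 y := by
    refine le_min ?_ ?_
    · nlinarith [min_le_left (1:ℝ) x]
    · exact le_trans (mul_le_mul_of_nonneg_left (min_le_right 1 x) ha0.le) hyx
  have e1 : (1 - Real.exp (-1)) * (a * min 1 x) ≤ (1 - Real.exp (-1)) * min 1 y :=
    mul_le_mul_of_nonneg_left hmin hE.le
  have e2 : (1 - Real.exp (-1)) * min 1 y ≤ 1 - Real.exp (-y) := aux_lower y hy0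
  have hny : -t * φ l₁ = -y := by rw [hy_def]; ring
  have hnx : -t * φ l₂ = -x := by rw [hx_def]; ring
  rw [hny, hnx] at hmono
  have e4 : D * (1 - Real.exp (-x)) ≤ D * min 1 x :=
    mul_le_mul_of_nonneg_left (aux_upper x hx0) hD0.le
  have e5 : D * min 1 x ≤ C * min 1 x := mul_le_mul_of_nonneg_right hDC hmin0
  have e6 : (1 - Real.exp (-1)) * (a * min 1 x) = 2 * (C * min 1 x) := by
    rw [hC_def]; ring
  have hgoal : C * min 1 x ≤ (μ t (Set.Ici r)).toReal := by linarith
  exact hgoal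
end
end

section
/- Let φ be a Bernstein function with φ(0) = 0 and φ(1) = 1 such that φ(λθ) ≤ C·λ^β·φ(θ) for all λ ∈ (0,1] and all θ ∈ (0,1), for some β ∈ (0,1] and C ≥ 1 (weak lower scaling at zero), and let T_n be the associated discrete subordinator. Then for each d ∈ ℕ there exists a constant C_d > 0 such that ∑_{k=1}^∞ P(T_n = k) · k^{−d/2} ≤ C_d · (φ^{−1}(1/n))^{d/2} for all n ∈ ℕ, where φ^{−1}(u) = inf{λ > 0 : φ(λ) ≥ u}. -/
open MeasureTheory Real Set

noncomputable section

/-- `c(φ,k) = |φ^{(k)}(1)| / k!`. -/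
def bernWeight (φ : ℝ → ℝ) (k : ℕ) : ℝ := |iteratedDeriv k φ 1| / (Nat.factorial k : ℝ)

/-- Generalized right-continuous inverse: `φ⁻¹(u) = inf {l > 0 : φ(l) ≥ u}`. -/
def genInv (φ : ℝ → ℝ) (u : ℝ) : ℝ := sInf {l : ℝ | 0 < l ∧ u ≤ φ l}

lemma hasDerivAt_taylorPoly (a : ℕ → ℝ) (N : ℕ) (u : ℝ) :
    HasDerivAt (fun v => ∑ k ∈ Finset.range (N+1), a k * (v-1)^k / (Nat.factorial k))
      (∑ k ∈ Finset.range N, a (k+1) * (u-1)^k / (Nat.factorial k)) u := by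
  have h : ∀ k : ℕ, HasDerivAt (fun v : ℝ => a k * (v-1)^k / (Nat.factorial k))
      (a k * ((k:ℝ) * (u-1)^(k-1)) / (Nat.factorial k)) u := by
    intro k
    have h1 : HasDerivAt (fun v : ℝ => (v-1)^k) ((k:ℝ) * (u-1)^(k-1) * 1) u :=
      ((hasDerivAt_id u).sub_const 1).pow k
    simpa [mul_one] using (h1.const_mul (a k)).div_const ((Nat.factorial k : ℝ))
  have hsum := HasDerivAt.fun_sum (fun k (_ : k ∈ Finset.range (N+1)) => h k)
  have heq : ∑ k ∈ Finset.range (N+1), a k * ((k:ℝ) * (u-1)^(k-1)) / (Nat.factorial k)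
      = ∑ k ∈ Finset.range N, a (k+1) * (u-1)^k / (Nat.factorial k) := by
    rw [Finset.sum_range_succ']
    simp only [Nat.cast_zero, zero_mul, mul_zero, zero_div, add_zero]
    refine Finset.sum_congr rfl fun k _ => ?_
    have hfac : (Nat.factorial (k+1) : ℝ) = (k+1) * (Nat.factorial k : ℝ) := by
      rw [Nat.factorial_succ]; push_cast; ring
    have hk : ((k:ℝ)+1) ≠ 0 := by positivity
    have hf : (Nat.factorial k : ℝ) ≠ 0 := Nat.cast_ne_zero.2 (Nat.factorial_ne_zero k)
    rw [hfac, Nat.add_sub_cancel]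
    push_cast
    field_simp
  rw [heq] at hsum
  exact hsum

lemma taylorPoly_one (a : ℕ → ℝ) (N : ℕ) :
    ∑ k ∈ Finset.range (N+1), a k * ((1:ℝ)-1)^k / (Nat.factorial k) = a 0 := by
  rw [Finset.sum_eq_single 0]
  · simp
  · intro k _ hk; simp [zero_pow hk]
  · intro h; exact absurd (Finset.mem_range.2 (Nat.succ_pos N)) h

lemma cm_remainder : ∀ (N : ℕ) (g : ℝ → ℝ), ContDiffOn ℝ (⊤ : ℕ∞) g (Set.Ioi 0) →
    (∀ (n : ℕ) (u : ℝ), 0 < u → 0 ≤ (-1:ℝ)^n * iteratedDeriv n g u) →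
    ∀ u : ℝ, 0 < u → u ≤ 1 →
    ∑ k ∈ Finset.range N, iteratedDeriv k g 1 * (u-1)^k / (Nat.factorial k) ≤ g u := by
  intro N
  induction N with
  | zero =>
    intro g _ hsign u hu _
    simpa [iteratedDeriv_zero] using hsign 0 u hu
  | succ N ih =>
    intro g hg hsign u hu hu1
    set P : ℝ → ℝ := fun v => ∑ k ∈ Finset.range (N+1),
      iteratedDeriv k g 1 * (v-1)^k / (Nat.factorial k) with hP
    set Q : ℝ → ℝ := fun x => ∑ k ∈ Finset.range N,
      iteratedDeriv (k+1) g 1 * (x-1)^k / (Nat.factorial k) with hQdef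
    show P u ≤ g u
    have hg' : ContDiffOn ℝ (⊤ : ℕ∞) (deriv g) (Set.Ioi 0) := hg.deriv_of_isOpen isOpen_Ioi (by simp)
    have hneg_sign : ∀ (n : ℕ) (x : ℝ), 0 < x → 0 ≤ (-1:ℝ)^n * iteratedDeriv n (fun y => -deriv g y) x := by
      intro n x hx
      rw [iteratedDeriv_fun_neg, ← iteratedDeriv_succ']
      have h1 := hsign (n+1) x hx
      have h2 : (-1:ℝ)^n * -iteratedDeriv (n+1) g x = (-1:ℝ)^(n+1) * iteratedDeriv (n+1) g x := by
        rw [pow_succ]; ring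
      rw [h2]; exact h1
    have hQ : ∀ x : ℝ, 0 < x → x ≤ 1 → deriv g x ≤ Q x := by
      intro x hx hx1
      have h := ih (fun y => -deriv g y) hg'.neg hneg_sign x hx hx1
      have heq : ∑ k ∈ Finset.range N, iteratedDeriv k (fun y => -deriv g y) 1 * (x-1)^k / (Nat.factorial k)
          = -Q x := by
        rw [hQdef, ← Finset.sum_neg_distrib]
        refine Finset.sum_congr rfl fun k _ => ?_
        rw [iteratedDeriv_fun_neg, ← iteratedDeriv_succ']
        ring
      rw [heq] at h
      have h3 : (fun y => -deriv g y) x = -(deriv g x) := rfl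
      linarith
    have hgd : ∀ x : ℝ, 0 < x → HasDerivAt g (deriv g x) x := by
      intro x hx
      exact ((hg.differentiableOn (by simp)).differentiableAt (Ioi_mem_nhds hx)).hasDerivAt
    have hr : ∀ x : ℝ, 0 < x → HasDerivAt (fun v => g v - P v) (deriv g x - Q x) x := by
      intro x hx
      exact (hgd x hx).sub (hasDerivAt_taylorPoly (fun k => iteratedDeriv k g 1) N x)
    have hP1 : P 1 = g 1 := by
      rw [hP]
      simpa [iteratedDeriv_zero] using taylorPoly_one (fun k => iteratedDeriv k g 1) N
    rcases eq_or_lt_of_le hu1 with h | h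
    · subst h; exact le_of_eq hP1
    · have hPc : Continuous P := continuous_iff_continuousAt.2 fun x =>
        (hasDerivAt_taylorPoly (fun k => iteratedDeriv k g 1) N x).continuousAt
      have hanti : AntitoneOn (fun v => g v - P v) (Set.Icc u 1) := by
        apply antitoneOn_of_deriv_nonpos (convex_Icc u 1)
        · exact ((hg.continuousOn.mono (fun x hx => lt_of_lt_of_le hu hx.1)).sub
            hPc.continuousOn)
        · intro x hx
          rw [interior_Icc] at hx
          exact (hr x (hu.trans hx.1)).differentiableAt.differentiableWithinAt
        · intro x hx
          rw [interior_Icc] at hx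
          rw [(hr x (hu.trans hx.1)).deriv]
          have := hQ x (hu.trans hx.1) hx.2.le
          linarith
      have := hanti (Set.mem_Icc.2 ⟨le_refl u, hu1⟩) (Set.mem_Icc.2 ⟨hu1, le_refl 1⟩) hu1
      simp only at this
      rw [hP1] at this
      linarith

lemma bern_mono (φ : ℝ → ℝ) (hφ : IsBernstein φ) : MonotoneOn φ (Set.Ici 0) := by
  obtain ⟨hc, hsm, hnn, hsign⟩ := hφ
  apply monotoneOn_of_deriv_nonneg (convex_Ici 0) hc
  · rw [interior_Ici]
    exact hsm.differentiableOn (by simp)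
  · intro x hx
    rw [interior_Ici] at hx
    have := hsign 1 le_rfl x hx
    simpa [iteratedDeriv_one] using this

lemma bern_sign (φ : ℝ → ℝ) (hφ : IsBernstein φ) :
    ∀ (n : ℕ) (x : ℝ), 0 < x → 0 ≤ (-1:ℝ)^n * iteratedDeriv n (deriv φ) x := by
  intro n x hx
  rw [← iteratedDeriv_succ']
  have := hφ.2.2.2 (n+1) (Nat.le_add_left 1 n) x hx
  simpa using this

lemma bern_partial_sum (φ : ℝ → ℝ) (hφ : IsBernstein φ) (hφ1 : φ 1 = 1)
    {t : ℝ} (ht0 : 0 < t) (ht1 : t < 1) (N : ℕ) :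
    ∑ k ∈ Finset.range N, bernWeight φ (k+1) * t^(k+1) ≤ 1 - φ (1 - t) := by
  have hsm := hφ.2.1
  have hsign := hφ.2.2.2
  set u : ℝ := 1 - t with hudef
  have hu : 0 < u := by simp [hudef]; linarith
  have hu1 : u < 1 := by simp [hudef]; linarith
  set P : ℝ → ℝ := fun v => ∑ k ∈ Finset.range (N+1),
    iteratedDeriv k φ 1 * (v-1)^k / (Nat.factorial k) with hPdef
  set Q : ℝ → ℝ := fun x => ∑ k ∈ Finset.range N,
    iteratedDeriv (k+1) φ 1 * (x-1)^k / (Nat.factorial k) with hQdef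
  -- Q x ≤ deriv φ x  on (0,1]
  have hg' : ContDiffOn ℝ (⊤ : ℕ∞) (deriv φ) (Set.Ioi 0) := hsm.deriv_of_isOpen isOpen_Ioi (by simp)
  have hQle : ∀ x : ℝ, 0 < x → x ≤ 1 → Q x ≤ deriv φ x := by
    intro x hx hx1
    have h := cm_remainder N (deriv φ) hg' (bern_sign φ hφ) x hx hx1
    have heq : ∑ k ∈ Finset.range N, iteratedDeriv k (deriv φ) 1 * (x-1)^k / (Nat.factorial k)
        = Q x := by
      rw [hQdef]
      refine Finset.sum_congr rfl fun k _ => ?_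
      rw [← iteratedDeriv_succ']
    rwa [heq] at h
  have hgd : ∀ x : ℝ, 0 < x → HasDerivAt φ (deriv φ x) x := fun x hx =>
    ((hsm.differentiableOn (by simp)).differentiableAt (Ioi_mem_nhds hx)).hasDerivAt
  have hr : ∀ x : ℝ, 0 < x → HasDerivAt (fun v => φ v - P v) (deriv φ x - Q x) x := fun x hx =>
    (hgd x hx).sub (hasDerivAt_taylorPoly (fun k => iteratedDeriv k φ 1) N x)
  have hP1 : P 1 = φ 1 := by
    rw [hPdef]
    simpa [iteratedDeriv_zero] using taylorPoly_one (fun k => iteratedDeriv k φ 1) N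
  have hPc : Continuous P := continuous_iff_continuousAt.2 fun x =>
    (hasDerivAt_taylorPoly (fun k => iteratedDeriv k φ 1) N x).continuousAt
  have hmono : MonotoneOn (fun v => φ v - P v) (Set.Icc u 1) := by
    apply monotoneOn_of_deriv_nonneg (convex_Icc u 1)
    · exact (hφ.1.mono (fun x hx => le_trans hu.le hx.1)).sub hPc.continuousOn
    · intro x hx
      rw [interior_Icc] at hx
      exact (hr x (hu.trans hx.1)).differentiableAt.differentiableWithinAt
    · intro x hx
      rw [interior_Icc] at hx
      rw [(hr x (hu.trans hx.1)).deriv]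
      have := hQle x (hu.trans hx.1) hx.2.le
      linarith
  have hkey : φ u ≤ P u := by
    have := hmono (Set.mem_Icc.2 ⟨le_refl u, hu1.le⟩) (Set.mem_Icc.2 ⟨hu1.le, le_refl 1⟩) hu1.le
    simp only at this
    rw [hP1] at this
    linarith
  -- Now compute P u
  have hPu : P u = 1 - ∑ k ∈ Finset.range N, bernWeight φ (k+1) * t^(k+1) := by
    rw [hPdef]
    simp only
    rw [Finset.sum_range_succ']
    have h0 : iteratedDeriv 0 φ 1 * (u-1)^0 / (Nat.factorial 0) = 1 := by
      simp [iteratedDeriv_zero, hφ1]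
    rw [h0]
    have hterm : ∀ k ∈ Finset.range N,
        iteratedDeriv (k+1) φ 1 * (u-1)^(k+1) / (Nat.factorial (k+1))
          = -(bernWeight φ (k+1) * t^(k+1)) := by
      intro k _
      have hs := hφ.2.2.2 (k+1) (Nat.le_add_left 1 k) 1 one_pos
      simp only [Nat.add_sub_cancel] at hs
      have habs : |iteratedDeriv (k+1) φ 1| = (-1:ℝ)^k * iteratedDeriv (k+1) φ 1 := by
        rw [← abs_of_nonneg hs, abs_mul, abs_pow, abs_neg, abs_one, one_pow, one_mul]
      have hut : u - 1 = -t := by rw [hudef]; ring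
      rw [hut, bernWeight, habs, neg_pow]
      ring
    rw [Finset.sum_congr rfl hterm]
    rw [Finset.sum_neg_distrib]
    ring
  rw [hPu] at hkey
  linarith

lemma genInv_mem_upper (φ : ℝ → ℝ) (hφ1 : φ 1 = 1) {v : ℝ} (hv1 : v ≤ 1) :
    (1:ℝ) ∈ {l : ℝ | 0 < l ∧ v ≤ φ l} := ⟨one_pos, by rw [hφ1]; exact hv1⟩

lemma genInv_bddBelow (φ : ℝ → ℝ) {v : ℝ} : BddBelow {l : ℝ | 0 < l ∧ v ≤ φ l} :=
  ⟨0, fun l hl => hl.1.le⟩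

lemma genInv_le_one (φ : ℝ → ℝ) (hφ1 : φ 1 = 1) {v : ℝ} (hv1 : v ≤ 1) : genInv φ v ≤ 1 :=
  csInf_le (genInv_bddBelow φ) (genInv_mem_upper φ hφ1 hv1)

lemma genInv_pos (φ : ℝ → ℝ) (hφ : IsBernstein φ) (hφ0 : φ 0 = 0) (hφ1 : φ 1 = 1)
    {v : ℝ} (hv : 0 < v) (hv1 : v ≤ 1) : 0 < genInv φ v := by
  have hcw : Filter.Tendsto φ (nhdsWithin 0 (Set.Ici 0)) (nhds 0) := by
    have := hφ.1 0 (Set.mem_Ici.2 le_rfl)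
    rw [ContinuousWithinAt, hφ0] at this
    exact this
  have hev : ∀ᶠ x in nhdsWithin 0 (Set.Ici 0), φ x < v := hcw.eventually_lt_const hv
  rw [eventually_nhdsWithin_iff, Metric.eventually_nhds_iff] at hev
  obtain ⟨ε, hε, hball⟩ := hev
  have hlow : ∀ l ∈ {l : ℝ | 0 < l ∧ v ≤ φ l}, ε ≤ l := by
    intro l hl
    by_contra hlt
    push_neg at hlt
    have : φ l < v := by
      apply hball
      · rw [Real.dist_eq, sub_zero, abs_of_pos hl.1]; exact hlt
      · exact Set.mem_Ici.2 hl.1.le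
    exact absurd hl.2 (not_le.2 this)
  exact lt_of_lt_of_le hε (le_csInf ⟨1, genInv_mem_upper φ hφ1 hv1⟩ hlow)

lemma genInv_spec (φ : ℝ → ℝ) (hφ : IsBernstein φ) (hφ0 : φ 0 = 0) (hφ1 : φ 1 = 1)
    {v : ℝ} (hv : 0 < v) (hv1 : v ≤ 1) : v ≤ φ (genInv φ v) := by
  set a := genInv φ v with ha
  have hapos : 0 < a := genInv_pos φ hφ hφ0 hφ1 hv hv1
  have hseq : ∀ m : ℕ, v ≤ φ (a + 1/(m+1)) := by
    intro m
    have h1 : a < a + 1/(m+1) := by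
      have : (0:ℝ) < 1/(m+1) := by positivity
      linarith
    obtain ⟨l, hl, hl2⟩ := exists_lt_of_csInf_lt ⟨1, genInv_mem_upper φ hφ1 hv1⟩ h1
    calc v ≤ φ l := hl.2
    _ ≤ φ (a + 1/(m+1)) := bern_mono φ hφ (Set.mem_Ici.2 hl.1.le)
        (Set.mem_Ici.2 (by positivity)) hl2.le
  have hcont : ContinuousAt φ a := hφ.1.continuousAt (Ici_mem_nhds hapos)
  have htend : Filter.Tendsto (fun m : ℕ => φ (a + 1/(m+1))) Filter.atTop (nhds (φ a)) := by
    apply hcont.tendsto.comp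
    have : Filter.Tendsto (fun m : ℕ => a + 1/(m+1)) Filter.atTop (nhds (a + 0)) :=
      Filter.Tendsto.const_add a (tendsto_one_div_add_atTop_nhds_zero_nat)
    simpa using this
  exact ge_of_tendsto' htend hseq

lemma one_sub_exp_neg_ge {x : ℝ} (hx0 : 0 ≤ x) (hx1 : x ≤ 1) : x/2 ≤ 1 - Real.exp (-x) := by
  have hE := Real.add_one_le_exp x
  have hEpos := Real.exp_pos x
  rw [Real.exp_neg]
  have h2 : (1:ℝ) ≤ Real.exp x * (1 - x/2) := by nlinarith
  have h3 : (Real.exp x)⁻¹ ≤ 1 - x/2 := by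
    rw [inv_eq_one_div, div_le_iff₀ hEpos]
    nlinarith
  linarith

lemma geom34_sum_le (L : ℕ) : ∑ i ∈ Finset.range L, ((3:ℝ)/4)^i ≤ 4 := by
  rw [geom_sum_eq (by norm_num : (3:ℝ)/4 ≠ 1)]
  rw [div_le_iff_of_neg (by norm_num : (3:ℝ)/4 - 1 < 0)]
  have : (0:ℝ) ≤ ((3:ℝ)/4)^L := by positivity
  nlinarith

lemma decay_bound (d : ℕ) (β C : ℝ) (hβ0 : 0 < β) (hC : 0 < C) :
    ∃ K : ℝ, 0 < K ∧ ∀ x : ℝ, 0 < x → x ≤ 1 →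
      x ^ (-(d:ℝ)/2) * Real.exp (-(x ^ (-β)) / C) ≤ K * x := by
  set p : ℝ := ((d:ℝ)/2 + 1)/β with hp
  have hppos : 0 ≤ p := by positivity
  set M : ℕ := ⌈p⌉₊ with hM
  refine ⟨(Nat.factorial M : ℝ) * C^M, by positivity, ?_⟩
  intro x hx hx1
  set y : ℝ := x ^ (-β) with hy
  have hy1 : 1 ≤ y := Real.one_le_rpow_of_pos_of_le_one_of_nonpos hx hx1 (by linarith)
  have hy0 : 0 < y := lt_of_lt_of_le one_pos hy1
  have hβne : β ≠ 0 := ne_of_gt hβ0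
  have h1 : x ^ (-(d:ℝ)/2 - 1) = y ^ p := by
    rw [hy, ← Real.rpow_mul hx.le]
    congr 1
    rw [hp]
    field_simp
    ring
  have h2 : y ^ p ≤ y ^ (M:ℕ) := by
    rw [← Real.rpow_natCast y M]
    exact Real.rpow_le_rpow_of_exponent_le hy1 (Nat.le_ceil p)
  have h4 : (y/C)^M / (Nat.factorial M : ℝ) ≤ Real.exp (y/C) := by
    refine le_trans ?_ (Real.sum_le_exp_of_nonneg (by positivity : (0:ℝ) ≤ y/C) (M+1))
    exact Finset.single_le_sum (f := fun i => (y/C)^i / (Nat.factorial i : ℝ))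
      (fun i _ => by positivity) (Finset.self_mem_range_succ M)
  have h5 : y ^ (M:ℕ) ≤ (Nat.factorial M : ℝ) * C^M * Real.exp (y/C) := by
    rw [div_pow, div_div, div_le_iff₀ (by positivity)] at h4
    calc y^(M:ℕ) ≤ Real.exp (y/C) * (C^M * (Nat.factorial M : ℝ)) := h4
    _ = (Nat.factorial M : ℝ) * C^M * Real.exp (y/C) := by ring
  have hA : x ^ (-(d:ℝ)/2 - 1) ≤ (Nat.factorial M : ℝ) * C^M * Real.exp (y/C) := by
    rw [h1]; exact le_trans h2 h5
  have hexp : Real.exp (-y/C) * Real.exp (y/C) = 1 := by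
    rw [← Real.exp_add]
    have : -y/C + y/C = 0 := by ring
    rw [this, Real.exp_zero]
  have hB : x ^ (-(d:ℝ)/2 - 1) * Real.exp (-y/C) ≤ (Nat.factorial M:ℝ) * C^M := by
    calc x ^ (-(d:ℝ)/2 - 1) * Real.exp (-y/C)
        ≤ ((Nat.factorial M:ℝ) * C^M * Real.exp (y/C)) * Real.exp (-y/C) :=
          mul_le_mul_of_nonneg_right hA (Real.exp_pos _).le
    _ = (Nat.factorial M:ℝ) * C^M * (Real.exp (-y/C) * Real.exp (y/C)) := by ring
    _ = (Nat.factorial M:ℝ) * C^M := by rw [hexp, mul_one]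
  have h6 : x ^ (-(d:ℝ)/2) = x ^ (-(d:ℝ)/2 - 1) * x := by
    have harg : -(d:ℝ)/2 = (-(d:ℝ)/2 - 1) + 1 := by ring
    nth_rewrite 1 [harg]
    rw [Real.rpow_add hx, Real.rpow_one]
  rw [h6]
  calc x ^ (-(d:ℝ)/2 - 1) * x * Real.exp (-y/C)
      = (x ^ (-(d:ℝ)/2 - 1) * Real.exp (-y/C)) * x := by ring
  _ ≤ (Nat.factorial M:ℝ) * C^M * x := mul_le_mul_of_nonneg_right hB hx.le

lemma phi_le_one (φ : ℝ → ℝ) (hφ : IsBernstein φ) (hφ1 : φ 1 = 1)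
    {x : ℝ} (hx0 : 0 ≤ x) (hx1 : x ≤ 1) : φ x ≤ 1 := by
  rw [← hφ1]
  exact bern_mono φ hφ (Set.mem_Ici.2 hx0) (Set.mem_Ici.2 zero_le_one) hx1

lemma mgf_bound {Ω : Type*} [MeasureSpace Ω] [IsProbabilityMeasure (volume : Measure Ω)]
    (φ : ℝ → ℝ) (hφ : IsBernstein φ) (hφ1 : φ 1 = 1)
    (X : Ω → ℕ) (hm : Measurable X) (hp : ∀ ω, 1 ≤ X ω)
    (hd : ∀ k, 1 ≤ k → volume {ω | X ω = k} = ENNReal.ofReal (bernWeight φ k))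
    {lam : ℝ} (hlam : 0 < lam) :
    ProbabilityTheory.mgf (fun ω => (X ω : ℝ)) volume (-lam) ≤ 1 - φ (1 - Real.exp (-lam)) := by
  set t : ℝ := Real.exp (-lam) with htdef
  have ht0 : 0 < t := Real.exp_pos _
  have ht1 : t < 1 := by
    rw [htdef]
    exact Real.exp_lt_one_iff.2 (by linarith)
  have hXc : Measurable (fun ω => (X ω : ℝ)) := measurable_from_top.comp hm
  set g : ℕ → ℝ := fun k => Real.exp (-lam * k) with hgdef
  have hgm : Measurable g := measurable_from_top
  have hcomp : (fun ω => Real.exp (-lam * (X ω : ℝ))) = g ∘ X := rfl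
  have hint : Integrable (fun ω => Real.exp (-lam * (X ω : ℝ))) volume := by
    apply Integrable.mono' (integrable_const 1)
    · exact (Real.measurable_exp.comp ((measurable_const.mul hXc))).aestronglyMeasurable
    · filter_upwards with ω
      rw [Real.norm_eq_abs, abs_of_pos (Real.exp_pos _)]
      rw [Real.exp_le_one_iff]
      have : (0:ℝ) ≤ (X ω : ℝ) := Nat.cast_nonneg _
      nlinarith
  have hmap : ProbabilityTheory.mgf (fun ω => (X ω : ℝ)) volume (-lam)
      = ∑' k : ℕ, ((volume : Measure Ω).map X {k}).toReal * g k := by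
    rw [ProbabilityTheory.mgf]
    have e1 : ∫ ω, Real.exp (-lam * (X ω : ℝ)) ∂(volume : Measure Ω)
        = ∫ k, g k ∂((volume : Measure Ω).map X) := by
      rw [integral_map hm.aemeasurable hgm.aestronglyMeasurable]
    have e2 : Integrable g ((volume : Measure Ω).map X) := by
      rw [integrable_map_measure hgm.aestronglyMeasurable hm.aemeasurable]
      exact hint
    rw [e1, integral_countable' e2]
    simp [smul_eq_mul, measureReal_def]
  rw [hmap]
  have hsingle : ∀ k : ℕ, ((volume : Measure Ω).map X {k}) = volume {ω | X ω = k} := by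
    intro k
    rw [Measure.map_apply hm (measurableSet_singleton k)]
    rfl
  apply Real.tsum_le_of_sum_range_le
  · intro k
    have : (0:ℝ) ≤ g k := (Real.exp_pos _).le
    positivity
  · intro N
    cases N with
    | zero =>
      simp only [Finset.range_zero, Finset.sum_empty]
      have := phi_le_one φ hφ hφ1 (x := 1 - t) (by linarith) (by linarith)
      linarith
    | succ N =>
      rw [Finset.sum_range_succ']
      have h0 : ((volume : Measure Ω).map X {0}).toReal * g 0 = 0 := by
        rw [hsingle 0]
        have : {ω | X ω = 0} = (∅ : Set Ω) := by
          ext ω; simp only [Set.mem_setOf_eq, Set.mem_empty_iff_false, iff_false]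
          have := hp ω; omega
        rw [this]
        simp
      rw [h0, add_zero]
      have hterm : ∀ k ∈ Finset.range N,
          ((volume : Measure Ω).map X {k+1}).toReal * g (k+1)
            = bernWeight φ (k+1) * t^(k+1) := by
        intro k _
        rw [hsingle (k+1), hd (k+1) (by omega)]
        rw [ENNReal.toReal_ofReal (by rw [bernWeight]; positivity : (0:ℝ) ≤ bernWeight φ (k+1))]
        congr 1
        rw [hgdef]
        simp only
        rw [htdef, ← Real.exp_nat_mul]
        congr 1
        push_cast
        ring
      rw [Finset.sum_congr rfl hterm]
      exact bern_partial_sum φ hφ hφ1 ht0 ht1 N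

lemma chernoff {Ω : Type*} [MeasureSpace Ω] [IsProbabilityMeasure (volume : Measure Ω)]
    (φ : ℝ → ℝ) (hφ : IsBernstein φ) (hφ1 : φ 1 = 1)
    (R : ℕ → Ω → ℕ) (hmeas : ∀ j, Measurable (R j))
    (hindep : ProbabilityTheory.iIndepFun R volume)
    (hpos : ∀ j ω, 1 ≤ R j ω)
    (hdist : ∀ j k, 1 ≤ k → volume {ω | R j ω = k} = ENNReal.ofReal (bernWeight φ k))
    (T : ℕ → Ω → ℕ) (hT : ∀ n ω, T n ω = ∑ j ∈ Finset.range n, R j ω)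
    (n m : ℕ) (hm : 1 ≤ m) :
    (volume {ω | T n ω ≤ m}).toReal ≤ Real.exp 1 * Real.exp (-(n:ℝ) * φ (1/(2*(m:ℝ)))) := by
  set lam : ℝ := 1/(m:ℝ) with hlam
  have hm0 : (0:ℝ) < m := by exact_mod_cast hm
  have hlam0 : 0 < lam := by positivity
  have hlam1 : lam ≤ 1 := by rw [hlam, div_le_one hm0]; exact_mod_cast hm
  set X : ℕ → Ω → ℝ := fun j ω => (R j ω : ℝ) with hX
  have hXm : ∀ j, Measurable (X j) := fun j => measurable_from_top.comp (hmeas j)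
  have hindep' : ProbabilityTheory.iIndepFun X volume :=
    hindep.comp (fun _ => (Nat.cast : ℕ → ℝ)) (fun _ => measurable_from_top)
  have hTsum : (fun ω => (T n ω : ℝ)) = ∑ j ∈ Finset.range n, X j := by
    funext ω
    rw [Finset.sum_apply, hT n ω]
    push_cast
    rfl
  have hTm : Measurable (fun ω => (T n ω : ℝ)) := by
    have : (fun ω => (T n ω : ℝ)) = fun ω => ∑ j ∈ Finset.range n, X j ω := by
      rw [hTsum]; funext ω; rw [Finset.sum_apply]
    rw [this]
    exact Finset.measurable_sum _ (fun j _ => hXm j)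
  have hTnn : ∀ ω, (0:ℝ) ≤ (T n ω : ℝ) := fun ω => Nat.cast_nonneg _
  have hint : Integrable (fun ω => Real.exp (-lam * (T n ω : ℝ))) volume := by
    apply Integrable.mono' (integrable_const 1)
    · exact (Real.measurable_exp.comp (measurable_const.mul hTm)).aestronglyMeasurable
    · filter_upwards with ω
      rw [Real.norm_eq_abs, abs_of_pos (Real.exp_pos _), Real.exp_le_one_iff]
      nlinarith [hTnn ω]
  have hchern := ProbabilityTheory.measure_le_le_exp_mul_mgf (μ := (volume : Measure Ω))
    (X := fun ω => (T n ω : ℝ)) (m:ℝ) (by linarith : -lam ≤ 0) hint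
  have hset : {ω | (T n ω : ℝ) ≤ (m:ℝ)} = {ω | T n ω ≤ m} := by
    ext ω; simp [Nat.cast_le]
  rw [hset] at hchern
  set b : ℝ := 1 - φ (1 - Real.exp (-lam)) with hb
  have hexplt : Real.exp (-lam) < 1 := Real.exp_lt_one_iff.2 (by linarith)
  have hb0 : 0 ≤ b := by
    have := phi_le_one φ hφ hφ1 (x := 1 - Real.exp (-lam))
      (by linarith) (by nlinarith [Real.exp_pos (-lam)])
    rw [hb]; linarith
  have hmgf : ProbabilityTheory.mgf (fun ω => (T n ω : ℝ)) volume (-lam) ≤ b ^ n := by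
    rw [hTsum, hindep'.mgf_sum hXm (Finset.range n)]
    calc ∏ j ∈ Finset.range n, ProbabilityTheory.mgf (X j) volume (-lam)
        ≤ ∏ _j ∈ Finset.range n, b := by
          apply Finset.prod_le_prod (fun j _ => ProbabilityTheory.mgf_nonneg)
          intro j _
          exact mgf_bound φ hφ hφ1 (R j) (hmeas j) (hpos j) (hdist j) hlam0
    _ = b ^ n := by rw [Finset.prod_const, Finset.card_range]
  have hbe : b ^ n ≤ Real.exp (-(n:ℝ) * φ (1 - Real.exp (-lam))) := by
    have h1 : b ≤ Real.exp (-(φ (1 - Real.exp (-lam)))) := by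
      have := Real.add_one_le_exp (-(φ (1 - Real.exp (-lam))))
      rw [hb]; linarith
    calc b^n ≤ Real.exp (-(φ (1 - Real.exp (-lam))))^n := pow_le_pow_left₀ hb0 h1 n
    _ = Real.exp (-(n:ℝ) * φ (1 - Real.exp (-lam))) := by
        rw [← Real.exp_nat_mul]; ring_nf
  have hφmono : φ (1/(2*(m:ℝ))) ≤ φ (1 - Real.exp (-lam)) := by
    have hhalf : lam/2 ≤ 1 - Real.exp (-lam) := one_sub_exp_neg_ge hlam0.le hlam1
    have heq : lam/2 = 1/(2*(m:ℝ)) := by rw [hlam]; ring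
    rw [← heq]
    exact bern_mono φ hφ (Set.mem_Ici.2 (by positivity)) (Set.mem_Ici.2 (by linarith)) hhalf
  have hexp2 : Real.exp (-(n:ℝ) * φ (1 - Real.exp (-lam)))
      ≤ Real.exp (-(n:ℝ) * φ (1/(2*(m:ℝ)))) := by
    apply Real.exp_le_exp.2
    have : (0:ℝ) ≤ (n:ℝ) := Nat.cast_nonneg n
    nlinarith
  have hfront : Real.exp (-(-lam) * (m:ℝ)) = Real.exp 1 := by
    congr 1
    rw [hlam]; field_simp
  calc (volume {ω | T n ω ≤ m}).toReal
      ≤ Real.exp (-(-lam) * m) * ProbabilityTheory.mgf (fun ω => (T n ω : ℝ)) volume (-lam) :=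
        hchern
  _ ≤ Real.exp 1 * Real.exp (-(n:ℝ) * φ (1/(2*(m:ℝ)))) := by
      rw [hfront]
      exact mul_le_mul_of_nonneg_left (le_trans hmgf (le_trans hbe hexp2)) (Real.exp_pos 1).le

set_option maxHeartbeats 1000000 in
theorem discrete_subordinator_moment_bound
    (φ : ℝ → ℝ) (hφ : IsBernstein φ) (hφ0 : φ 0 = 0) (hφ1 : φ 1 = 1)
    (β C : ℝ) (hβ0 : 0 < β) (hβ1 : β ≤ 1) (hC : 1 ≤ C)
    (hscal : ∀ l : ℝ, 0 < l → l ≤ 1 → ∀ θ : ℝ, 0 < θ → θ < 1 →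
      φ (l * θ) ≤ C * l ^ β * φ θ)
    {Ω : Type*} [MeasureSpace Ω] [IsProbabilityMeasure (volume : Measure Ω)]
    (R : ℕ → Ω → ℕ) (hmeas : ∀ j, Measurable (R j))
    (hindep : ProbabilityTheory.iIndepFun R volume)
    (hpos : ∀ j ω, 1 ≤ R j ω)
    (hdist : ∀ j k, 1 ≤ k → volume {ω | R j ω = k} = ENNReal.ofReal (bernWeight φ k))
    (T : ℕ → Ω → ℕ) (hT : ∀ n ω, T n ω = ∑ j ∈ Finset.range n, R j ω)
    (d : ℕ) :
    ∃ C_d : ℝ, 0 < C_d ∧ ∀ n : ℕ, 1 ≤ n →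
      (∑' k : ℕ, (volume {ω | T n ω = k + 1}).toReal *
          ((k : ℝ) + 1) ^ (-(d : ℝ) / 2)) ≤
        C_d * genInv φ (1 / (n : ℝ)) ^ ((d : ℝ) / 2) := by
  have hC0 : (0:ℝ) < C := lt_of_lt_of_le one_pos hC
  have hle1 : ∀ s : Set Ω, (volume s).toReal ≤ 1 := fun s => by
    simpa using ENNReal.toReal_mono ENNReal.one_ne_top prob_le_one
  have hTmeas : ∀ n, Measurable (T n) := by
    intro n
    have he : T n = fun ω => ∑ j ∈ Finset.range n, R j ω := funext (hT n)
    rw [he]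
    exact Finset.measurable_sum _ (fun j _ => hmeas j)
  have hsum_le : ∀ (n : ℕ) (S : Finset ℕ) (m : ℕ), (∀ k ∈ S, k+1 ≤ m) →
      ∑ k ∈ S, (volume {ω | T n ω = k+1}).toReal ≤ (volume {ω | T n ω ≤ m}).toReal := by
    intro n S m hS
    have hdisj : (↑S : Set ℕ).PairwiseDisjoint (fun k => {ω | T n ω = k+1}) := by
      intro i _ j _ hij
      rw [Function.onFun, Set.disjoint_left]
      intro ω h1 h2
      simp only [Set.mem_setOf_eq] at h1 h2
      exact hij (by omega)
    have hms : ∀ k ∈ S, MeasurableSet {ω | T n ω = k+1} := fun k _ =>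
      hTmeas n (measurableSet_singleton (k+1))
    rw [← ENNReal.toReal_sum (fun k _ => measure_ne_top _ _)]
    apply ENNReal.toReal_mono (measure_ne_top _ _)
    rw [← measure_biUnion_finset hdisj hms]
    apply measure_mono
    intro ω hω
    simp only [Set.mem_iUnion, Set.mem_setOf_eq] at hω ⊢
    obtain ⟨k, hk, hk2⟩ := hω
    rw [hk2]
    exact hS k hk
  obtain ⟨K, hK0, hKb⟩ := decay_bound d β C hβ0 hC0
  rcases Nat.eq_zero_or_pos d with hd0 | hd1
  · -- d = 0
    subst hd0
    refine ⟨1, one_pos, ?_⟩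
    intro n hn
    simp only [Nat.cast_zero, neg_zero, zero_div, Real.rpow_zero, mul_one, one_mul]
    apply Real.tsum_le_of_sum_range_le (fun k => ENNReal.toReal_nonneg)
    intro N
    calc ∑ k ∈ Finset.range N, (volume {ω | T n ω = k+1}).toReal
        ≤ (volume {ω | T n ω ≤ N}).toReal := by
          apply hsum_le n (Finset.range N) N
          intro k hk
          simp only [Finset.mem_range] at hk
          omega
    _ ≤ 1 := hle1 _
  · -- d ≥ 1
    set C_d : ℝ := Real.exp 1 * (4:ℝ)^((d:ℝ)/2) * K * 2 + (4:ℝ)^((d:ℝ)/2) * 4 with hCd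
    refine ⟨C_d, by positivity, ?_⟩
    intro n hn
    have hn0 : (0:ℝ) < n := by exact_mod_cast hn
    set v : ℝ := 1/(n:ℝ) with hv
    have hv0 : 0 < v := by positivity
    have hv1 : v ≤ 1 := by rw [hv, div_le_one hn0]; exact_mod_cast hn
    set a : ℝ := genInv φ v with ha
    have ha0 : 0 < a := genInv_pos φ hφ hφ0 hφ1 hv0 hv1
    have ha1 : a ≤ 1 := genInv_le_one φ hφ1 hv1
    have haφ : v ≤ φ a := genInv_spec φ hφ hφ0 hφ1 hv0 hv1
    have hkey : ∀ s : ℝ, a ≤ s → s < 1 → (s/a)^β / C ≤ (n:ℝ) * φ s := by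
      intro s has hs1
      have hs0 : 0 < s := lt_of_lt_of_le ha0 has
      have hl0 : 0 < a/s := by positivity
      have hl1 : a/s ≤ 1 := (div_le_one hs0).2 has
      have hsc := hscal (a/s) hl0 hl1 s hs0 hs1
      rw [div_mul_cancel₀ a (ne_of_gt hs0)] at hsc
      have h1 : v ≤ C * (a/s)^β * φ s := le_trans haφ hsc
      set X : ℝ := (a/s)^β with hX
      have hX0 : 0 < X := Real.rpow_pos_of_pos hl0 β
      have hXinv : (s/a)^β = X⁻¹ := by
        rw [hX, ← Real.inv_rpow hl0.le, inv_div]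
      rw [hXinv]
      have hnv : (n:ℝ) * v = 1 := by rw [hv]; field_simp
      have h2 : 1 ≤ (n:ℝ) * (C * X * φ s) := by
        calc (1:ℝ) = (n:ℝ) * v := hnv.symm
        _ ≤ (n:ℝ) * (C * X * φ s) := mul_le_mul_of_nonneg_left h1 hn0.le
      rw [div_le_iff₀ hC0]
      have h3 := mul_le_mul_of_nonneg_left h2 (inv_pos.2 hX0).le
      rw [mul_one] at h3
      have hXX : X⁻¹ * X = 1 := inv_mul_cancel₀ (ne_of_gt hX0)
      calc X⁻¹ ≤ X⁻¹ * ((n:ℝ) * (C * X * φ s)) := h3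
      _ = (X⁻¹ * X) * ((n:ℝ) * C * φ s) := by ring
      _ = (n:ℝ) * φ s * C := by rw [hXX]; ring
    have hF : ∀ j : ℕ, 4*a*2^j ≤ 1 →
        (volume {ω | T n ω ≤ 2^(j+1)}).toReal
          ≤ Real.exp 1 * Real.exp (-(((4*a*2^j : ℝ)) ^ (-β)) / C) := by
      intro j hPj
      have h2j : (0:ℝ) < (2:ℝ)^j := by positivity
      have hx0 : (0:ℝ) < 4*a*2^j := by positivity
      have hch := chernoff φ hφ hφ1 R hmeas hindep hpos hdist T hT n (2^(j+1))
        Nat.one_le_two_pow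
      have hcast : ((2^(j+1) : ℕ) : ℝ) = 2 * (2:ℝ)^j := by push_cast; ring
      rw [hcast] at hch
      set s : ℝ := 1/(2*(2*(2:ℝ)^j)) with hs
      have hseq : s = 1/(4*(2:ℝ)^j) := by rw [hs]; ring_nf
      have has : a ≤ s := by
        rw [hseq, le_div_iff₀ (by positivity)]
        nlinarith [hPj]
      have hs1 : s < 1 := by
        rw [hseq, div_lt_one (by positivity)]
        nlinarith [one_le_pow₀ (by norm_num : (1:ℝ) ≤ 2) (n := j)]
      have hk := hkey s has hs1
      have hsa : s/a = (4*a*2^j)⁻¹ := by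
        rw [hseq]; field_simp
      have hrw : (s/a)^β = (4*a*2^j : ℝ)^(-β) := by
        rw [hsa, Real.inv_rpow hx0.le, ← Real.rpow_neg hx0.le]
      rw [hrw] at hk
      calc (volume {ω | T n ω ≤ 2^(j+1)}).toReal
          ≤ Real.exp 1 * Real.exp (-(n:ℝ) * φ s) := hch
      _ ≤ Real.exp 1 * Real.exp (-(((4*a*2^j : ℝ)) ^ (-β)) / C) := by
          apply mul_le_mul_of_nonneg_left _ (Real.exp_pos 1).le
          apply Real.exp_le_exp.2
          rw [neg_div]
          linarith [hk]
    apply Real.tsum_le_of_sum_range_le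
    · intro k; positivity
    intro N
    -- threshold
    have hex : ∃ j : ℕ, 1 < 4*a*(2:ℝ)^j := by
      obtain ⟨j, hj⟩ := pow_unbounded_of_one_lt (1/(4*a)) (by norm_num : (1:ℝ) < 2)
      exact ⟨j, by rw [div_lt_iff₀ (by positivity)] at hj; nlinarith⟩
    set t0 : ℕ := Nat.find hex with ht0
    set L : ℕ := N + t0 + 1 with hL
    set F : ℕ → ℝ := fun j => (volume {ω | T n ω ≤ 2^(j+1)}).toReal with hFdef
    have hgroup : ∑ k ∈ Finset.range N,
        (volume {ω | T n ω = k+1}).toReal * ((k:ℝ)+1) ^ (-(d:ℝ)/2)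
        ≤ ∑ j ∈ Finset.range L, ((2:ℝ)^j) ^ (-(d:ℝ)/2) * F j := by
      have hmapsto : ∀ k ∈ Finset.range N, Nat.log 2 (k+1) ∈ Finset.range L := by
        intro k hk
        simp only [Finset.mem_range] at hk ⊢
        have h1 : Nat.log 2 (k+1) ≤ k+1 := Nat.log_le_self 2 (k+1)
        omega
      rw [← Finset.sum_fiberwise_of_maps_to hmapsto
        (fun k => (volume {ω | T n ω = k+1}).toReal * ((k:ℝ)+1) ^ (-(d:ℝ)/2))]
      apply Finset.sum_le_sum
      intro j hj
      have hinner : ∀ k ∈ (Finset.range N).filter (fun k => Nat.log 2 (k+1) = j),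
          (volume {ω | T n ω = k+1}).toReal * ((k:ℝ)+1) ^ (-(d:ℝ)/2)
          ≤ (volume {ω | T n ω = k+1}).toReal * ((2:ℝ)^j) ^ (-(d:ℝ)/2) := by
        intro k hk
        simp only [Finset.mem_filter] at hk
        apply mul_le_mul_of_nonneg_left _ ENNReal.toReal_nonneg
        apply Real.rpow_le_rpow_of_nonpos (by positivity)
        · have h2 := Nat.pow_log_le_self 2 (Nat.succ_ne_zero k)
          rw [hk.2] at h2
          have : ((2^j : ℕ) : ℝ) ≤ ((k+1 : ℕ) : ℝ) := by exact_mod_cast h2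
          push_cast at this
          linarith
        · have : (0:ℝ) ≤ (d:ℝ) := Nat.cast_nonneg d
          linarith
      calc ∑ k ∈ (Finset.range N).filter (fun k => Nat.log 2 (k+1) = j),
            (volume {ω | T n ω = k+1}).toReal * ((k:ℝ)+1) ^ (-(d:ℝ)/2)
          ≤ ∑ k ∈ (Finset.range N).filter (fun k => Nat.log 2 (k+1) = j),
            (volume {ω | T n ω = k+1}).toReal * ((2:ℝ)^j) ^ (-(d:ℝ)/2) :=
            Finset.sum_le_sum hinner
      _ = (∑ k ∈ (Finset.range N).filter (fun k => Nat.log 2 (k+1) = j),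
            (volume {ω | T n ω = k+1}).toReal) * ((2:ℝ)^j) ^ (-(d:ℝ)/2) := by
            rw [← Finset.sum_mul]
      _ ≤ F j * ((2:ℝ)^j) ^ (-(d:ℝ)/2) := by
          apply mul_le_mul_of_nonneg_right _ (Real.rpow_nonneg (by positivity) _)
          apply hsum_le n _ (2^(j+1))
          intro k hk
          simp only [Finset.mem_filter] at hk
          have h3 := Nat.lt_pow_succ_log_self (by norm_num : 1 < 2) (k+1)
          rw [hk.2] at h3
          omega
      _ = ((2:ℝ)^j) ^ (-(d:ℝ)/2) * F j := mul_comm _ _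
    have hpart1 : ∑ j ∈ (Finset.range L).filter (fun j => 4*a*(2:ℝ)^j ≤ 1),
        ((2:ℝ)^j) ^ (-(d:ℝ)/2) * F j
        ≤ Real.exp 1 * (4:ℝ)^((d:ℝ)/2) * K * 2 * a^((d:ℝ)/2) := by
      have h4a : (0:ℝ) < 4*a := by positivity
      have hterm : ∀ j ∈ (Finset.range L).filter (fun j => 4*a*(2:ℝ)^j ≤ 1),
          ((2:ℝ)^j) ^ (-(d:ℝ)/2) * F j
          ≤ (Real.exp 1 * (4:ℝ)^((d:ℝ)/2) * a^((d:ℝ)/2) * K) * (4*a*2^j) := by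
        intro j hj
        simp only [Finset.mem_filter] at hj
        have hx0 : (0:ℝ) < 4*a*2^j := by positivity
        have hx1 : 4*a*(2:ℝ)^j ≤ 1 := hj.2
        have hne : -(d:ℝ)/2 = -((d:ℝ)/2) := by ring
        have hbase : (2:ℝ)^j = (4*a*2^j) / (4*a) := by
          rw [eq_div_iff (ne_of_gt h4a)]; ring
        have h1 : ((2:ℝ)^j) ^ (-(d:ℝ)/2)
            = ((4*a)^((d:ℝ)/2)) * ((4*a*2^j) ^ (-(d:ℝ)/2)) := by
          nth_rewrite 1 [hbase]
          rw [Real.div_rpow hx0.le h4a.le, hne, Real.rpow_neg h4a.le ((d:ℝ)/2),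
            div_eq_mul_inv, inv_inv]
          ring
        rw [h1]
        have h2 : F j ≤ Real.exp 1 * Real.exp (-(((4*a*2^j : ℝ)) ^ (-β)) / C) := hF j hx1
        have h3 : ((4*a*2^j : ℝ) ^ (-(d:ℝ)/2)) * Real.exp (-(((4*a*2^j : ℝ)) ^ (-β)) / C)
            ≤ K * (4*a*2^j) := hKb _ hx0 hx1
        have hFnn : 0 ≤ F j := by rw [hFdef]; exact ENNReal.toReal_nonneg
        calc ((4*a)^((d:ℝ)/2)) * ((4*a*2^j) ^ (-(d:ℝ)/2)) * F j
            ≤ ((4*a)^((d:ℝ)/2)) * ((4*a*2^j) ^ (-(d:ℝ)/2))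
              * (Real.exp 1 * Real.exp (-(((4*a*2^j : ℝ)) ^ (-β)) / C)) := by
              apply mul_le_mul_of_nonneg_left h2
              positivity
        _ = ((4*a)^((d:ℝ)/2)) * Real.exp 1
              * (((4*a*2^j) ^ (-(d:ℝ)/2)) * Real.exp (-(((4*a*2^j : ℝ)) ^ (-β)) / C)) := by
              ring
        _ ≤ ((4*a)^((d:ℝ)/2)) * Real.exp 1 * (K * (4*a*2^j)) := by
              apply mul_le_mul_of_nonneg_left h3
              positivity
        _ = (Real.exp 1 * (4*a)^((d:ℝ)/2) * K) * (4*a*2^j) := by ring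
        _ = (Real.exp 1 * (4:ℝ)^((d:ℝ)/2) * a^((d:ℝ)/2) * K) * (4*a*2^j) := by
              rw [Real.mul_rpow (by norm_num : (0:ℝ) ≤ 4) ha0.le]
              ring
      have hxsum : ∑ j ∈ (Finset.range L).filter (fun j => 4*a*(2:ℝ)^j ≤ 1),
          (4*a*(2:ℝ)^j) ≤ 2 := by
        have hsub : (Finset.range L).filter (fun j => 4*a*(2:ℝ)^j ≤ 1) ⊆ Finset.range t0 := by
          intro j hj
          simp only [Finset.mem_filter, Finset.mem_range] at hj ⊢
          by_contra hcon
          push_neg at hcon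
          have hspec := Nat.find_spec hex
          have hmon : (2:ℝ)^t0 ≤ (2:ℝ)^j := pow_le_pow_right₀ (by norm_num) hcon
          nlinarith [hj.2, hspec]
        calc ∑ j ∈ (Finset.range L).filter (fun j => 4*a*(2:ℝ)^j ≤ 1), (4*a*(2:ℝ)^j)
            ≤ ∑ j ∈ Finset.range t0, (4*a*(2:ℝ)^j) :=
              Finset.sum_le_sum_of_subset_of_nonneg hsub (fun j _ _ => by positivity)
        _ = 4*a* ∑ j ∈ Finset.range t0, (2:ℝ)^j := by rw [Finset.mul_sum]
        _ ≤ 2 := by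
            rw [geom_sum_eq (by norm_num : (2:ℝ) ≠ 1)]
            rcases Nat.eq_zero_or_pos t0 with h0 | h0
            · rw [h0]; norm_num
            · have hmin : ¬ (1 < 4*a*(2:ℝ)^(t0-1)) := Nat.find_min hex (by omega)
              push_neg at hmin
              have h2 : (2:ℝ)^t0 = 2 * (2:ℝ)^(t0-1) := by
                rw [← pow_succ']
                congr 1
                omega
              rw [h2]
              have hp : (0:ℝ) < (2:ℝ)^(t0-1) := by positivity
              nlinarith [hmin]
      calc ∑ j ∈ (Finset.range L).filter (fun j => 4*a*(2:ℝ)^j ≤ 1),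
            ((2:ℝ)^j) ^ (-(d:ℝ)/2) * F j
          ≤ ∑ j ∈ (Finset.range L).filter (fun j => 4*a*(2:ℝ)^j ≤ 1),
            (Real.exp 1 * (4:ℝ)^((d:ℝ)/2) * a^((d:ℝ)/2) * K) * (4*a*2^j) :=
            Finset.sum_le_sum hterm
      _ = (Real.exp 1 * (4:ℝ)^((d:ℝ)/2) * a^((d:ℝ)/2) * K)
            * ∑ j ∈ (Finset.range L).filter (fun j => 4*a*(2:ℝ)^j ≤ 1), (4*a*(2:ℝ)^j) := by
            rw [Finset.mul_sum]
      _ ≤ (Real.exp 1 * (4:ℝ)^((d:ℝ)/2) * a^((d:ℝ)/2) * K) * 2 := by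
            apply mul_le_mul_of_nonneg_left hxsum
            positivity
      _ = Real.exp 1 * (4:ℝ)^((d:ℝ)/2) * K * 2 * a^((d:ℝ)/2) := by ring
    have hpart2 : ∑ j ∈ (Finset.range L).filter (fun j => ¬ 4*a*(2:ℝ)^j ≤ 1),
        ((2:ℝ)^j) ^ (-(d:ℝ)/2) * F j
        ≤ (4:ℝ)^((d:ℝ)/2) * 4 * a^((d:ℝ)/2) := by
      have h4a : (0:ℝ) < 4*a := by positivity
      have hne : -(d:ℝ)/2 = -((d:ℝ)/2) := by ring
      have hsub2 : (Finset.range L).filter (fun j => ¬ 4*a*(2:ℝ)^j ≤ 1) ⊆ Finset.Ico t0 L := by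
        intro j hj
        simp only [Finset.mem_filter, Finset.mem_range] at hj
        rw [Finset.mem_Ico]
        exact ⟨Nat.find_le (not_le.1 hj.2), hj.1⟩
      have htermnn : ∀ j : ℕ, 0 ≤ ((2:ℝ)^j) ^ (-(d:ℝ)/2) * F j := by
        intro j
        apply mul_nonneg (Real.rpow_nonneg (by positivity) _)
        rw [hFdef]; exact ENNReal.toReal_nonneg
      have hterm2 : ∀ i ∈ Finset.range (L - t0),
          ((2:ℝ)^(t0+i)) ^ (-(d:ℝ)/2) ≤ (4*a)^((d:ℝ)/2) * ((3:ℝ)/4)^i := by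
        intro i _
        have hA : ((2:ℝ)^t0) ^ (-(d:ℝ)/2) ≤ (4*a)^((d:ℝ)/2) := by
          have hspec := Nat.find_spec hex
          have hlow : (4*a)⁻¹ ≤ (2:ℝ)^t0 := by
            rw [inv_eq_one_div, div_le_iff₀ h4a]
            nlinarith [hspec]
          have hexp0 : -(d:ℝ)/2 ≤ 0 := by
            have : (0:ℝ) ≤ (d:ℝ) := Nat.cast_nonneg d
            linarith
          calc ((2:ℝ)^t0) ^ (-(d:ℝ)/2) ≤ ((4*a)⁻¹) ^ (-(d:ℝ)/2) :=
              Real.rpow_le_rpow_of_nonpos (by positivity) hlow hexp0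
          _ = (4*a)^((d:ℝ)/2) := by
              rw [Real.inv_rpow h4a.le, hne, Real.rpow_neg h4a.le, inv_inv]
        have hB1 : ((2:ℝ)^i) ^ (-(d:ℝ)/2) ≤ ((2:ℝ)^i) ^ (-(1:ℝ)/2) := by
          apply Real.rpow_le_rpow_of_exponent_le (one_le_pow₀ (by norm_num : (1:ℝ) ≤ 2))
          have : (1:ℝ) ≤ (d:ℝ) := by exact_mod_cast hd1
          linarith
        have hB2 : ((2:ℝ)^i) ^ (-(1:ℝ)/2) = ((2:ℝ)^(-(1:ℝ)/2))^i := by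
          rw [← Real.rpow_natCast ((2:ℝ)) i, ← Real.rpow_mul (by norm_num : (0:ℝ) ≤ 2),
            ← Real.rpow_natCast ((2:ℝ)^(-(1:ℝ)/2)) i,
            ← Real.rpow_mul (by norm_num : (0:ℝ) ≤ 2), mul_comm]
        have h34 : (2:ℝ)^(-(1:ℝ)/2) ≤ 3/4 := by
          rw [show (-(1:ℝ)/2) = -(1/2 : ℝ) by ring,
            Real.rpow_neg (by norm_num : (0:ℝ) ≤ 2), ← Real.sqrt_eq_rpow]
          have hs2 : (4:ℝ)/3 ≤ Real.sqrt 2 := by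
            rw [show (4:ℝ)/3 = Real.sqrt ((4/3)^2) by rw [Real.sqrt_sq (by norm_num)]]
            apply Real.sqrt_le_sqrt
            norm_num
          have h6 : (Real.sqrt 2)⁻¹ ≤ ((4:ℝ)/3)⁻¹ := inv_anti₀ (by norm_num) hs2
          have h7 : ((4:ℝ)/3)⁻¹ = 3/4 := by norm_num
          rw [h7] at h6
          exact h6
        have hB3 : ((2:ℝ)^(-(1:ℝ)/2))^i ≤ ((3:ℝ)/4)^i :=
          pow_le_pow_left₀ (Real.rpow_nonneg (by norm_num) _) h34 i
        calc ((2:ℝ)^(t0+i)) ^ (-(d:ℝ)/2)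
            = (((2:ℝ)^t0) * ((2:ℝ)^i)) ^ (-(d:ℝ)/2) := by rw [pow_add]
        _ = ((2:ℝ)^t0) ^ (-(d:ℝ)/2) * ((2:ℝ)^i) ^ (-(d:ℝ)/2) := by
            rw [Real.mul_rpow (by positivity) (by positivity)]
        _ ≤ (4*a)^((d:ℝ)/2) * ((3:ℝ)/4)^i := by
            apply mul_le_mul hA (le_trans hB1 (le_trans (le_of_eq hB2) hB3))
              (Real.rpow_nonneg (by positivity) _) (Real.rpow_nonneg h4a.le _)
      calc ∑ j ∈ (Finset.range L).filter (fun j => ¬ 4*a*(2:ℝ)^j ≤ 1),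
            ((2:ℝ)^j) ^ (-(d:ℝ)/2) * F j
          ≤ ∑ j ∈ Finset.Ico t0 L, ((2:ℝ)^j) ^ (-(d:ℝ)/2) * F j :=
            Finset.sum_le_sum_of_subset_of_nonneg hsub2 (fun j _ _ => htermnn j)
      _ ≤ ∑ j ∈ Finset.Ico t0 L, ((2:ℝ)^j) ^ (-(d:ℝ)/2) := by
            apply Finset.sum_le_sum
            intro j _
            have := hle1 {ω | T n ω ≤ 2^(j+1)}
            have hFj : F j ≤ 1 := by rw [hFdef]; exact this
            calc ((2:ℝ)^j) ^ (-(d:ℝ)/2) * F j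
                ≤ ((2:ℝ)^j) ^ (-(d:ℝ)/2) * 1 := by
                  apply mul_le_mul_of_nonneg_left hFj (Real.rpow_nonneg (by positivity) _)
            _ = ((2:ℝ)^j) ^ (-(d:ℝ)/2) := mul_one _
      _ = ∑ i ∈ Finset.range (L - t0), ((2:ℝ)^(t0+i)) ^ (-(d:ℝ)/2) := by
            rw [Finset.sum_Ico_eq_sum_range]
      _ ≤ ∑ i ∈ Finset.range (L - t0), (4*a)^((d:ℝ)/2) * ((3:ℝ)/4)^i :=
            Finset.sum_le_sum hterm2
      _ = (4*a)^((d:ℝ)/2) * ∑ i ∈ Finset.range (L - t0), ((3:ℝ)/4)^i := by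
            rw [Finset.mul_sum]
      _ ≤ (4*a)^((d:ℝ)/2) * 4 := by
            apply mul_le_mul_of_nonneg_left (geom34_sum_le _) (Real.rpow_nonneg h4a.le _)
      _ = (4:ℝ)^((d:ℝ)/2) * 4 * a^((d:ℝ)/2) := by
            rw [Real.mul_rpow (by norm_num : (0:ℝ) ≤ 4) ha0.le]
            ring
    calc ∑ k ∈ Finset.range N, (volume {ω | T n ω = k+1}).toReal * ((k:ℝ)+1) ^ (-(d:ℝ)/2)
        ≤ ∑ j ∈ Finset.range L, ((2:ℝ)^j) ^ (-(d:ℝ)/2) * F j := hgroup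
    _ = (∑ j ∈ (Finset.range L).filter (fun j => 4*a*(2:ℝ)^j ≤ 1),
          ((2:ℝ)^j) ^ (-(d:ℝ)/2) * F j)
        + ∑ j ∈ (Finset.range L).filter (fun j => ¬ 4*a*(2:ℝ)^j ≤ 1),
          ((2:ℝ)^j) ^ (-(d:ℝ)/2) * F j :=
        (Finset.sum_filter_add_sum_filter_not _ _ _).symm
    _ ≤ C_d * a^((d:ℝ)/2) := by
        rw [hCd]
        have := hpart1
        have := hpart2
        nlinarith [hpart1, hpart2]
end
end
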